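/- arXiv:1503.03742 — 5 statements merged into one kernel-verified Lean document; each statement's English description precedes it below -/
import Mathlib

section
/- Assume {(a_i,u_i)}_{i=1}^n is superincreasing. Let x ∈ K and y ∈ rect(u) with y ⪯ x. Then ∑_{i=1}^n a_i y_i ≤ ∑_{i=1}^n a_i x_i, and hence y ∈ K. Moreover, if y ≺ x and s is the largest index with y_s ≠ x_s, then: (1) ∑ a_i y_i = ∑ a_i x_i if and only if a_s = ∑_{i<s} a_i u_i, y_s = x_s − 1, and y_i = u_i and x_i = 0 for every i < s; (2) the vector z defined by z_i = u_i for i < s, z_s = y_s, and z_i = x_i for i > s belongs to K. -/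
/-!
If `s` is the last index where `y` and `x` differ and `y s < x s`, then `∑ a x - ∑ a y` is the
sum of the four nonnegative terms
`(a s - ∑_{i<s} a i u i) + a s (x s - y s - 1) + ∑_{i<s} a i (u i - y i) + ∑_{i<s} a i x i`,
the first one by superincreasingness; equality holds exactly when all four vanish. The vector
`z` of part (2) lies in `rect u` and still falls below `x` at `s`, so it is no heavier than `x`.
-/

/-- `y` is lexicographically smaller than or equal to `x`: either `y = x`, or at the
largest index `s` where they differ, `y s < x s`. -/
def lexLe {n : ℕ} (y x : Fin n → ℤ) : Prop :=
  y = x ∨ ∃ s : Fin n, y s < x s ∧ ∀ k : Fin n, s < k → y k = x k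

open Finset

section
variable {ι : Type*} [Fintype ι] [LinearOrder ι] [LocallyFiniteOrderBot ι]
  [LocallyFiniteOrderTop ι]

theorem sum_eq_sum_Iio_add_add_sum_Ioi {M : Type*} [AddCommMonoid M] (f : ι → M) (s : ι) :
    ∑ i, f i = ∑ i ∈ Iio s, f i + f s + ∑ i ∈ Ioi s, f i := by
  rw [← sum_filter_add_sum_filter_not univ (· < s), filter_gt_eq_Iio]
  simp only [not_lt, filter_le_eq_Ici, Ici_eq_cons_Ioi, sum_cons, add_assoc]

theorem sum_mul_sub_sum_mul_eq_of_eqOn_Ioi {R : Type*} [CommRing R] (a u x y : ι → R) {s : ι}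
    (htail : ∀ k, s < k → y k = x k) :
    ∑ i, a i * x i - ∑ i, a i * y i =
      (a s - ∑ i ∈ Iio s, a i * u i) + a s * (x s - y s - 1) +
        ∑ i ∈ Iio s, a i * (u i - y i) + ∑ i ∈ Iio s, a i * x i := by
  have hIoi : ∑ i ∈ Ioi s, a i * y i = ∑ i ∈ Ioi s, a i * x i :=
    sum_congr rfl fun i hi => by rw [htail i (mem_Ioi.mp hi)]
  rw [sum_eq_sum_Iio_add_add_sum_Ioi _ s, sum_eq_sum_Iio_add_add_sum_Ioi (fun i => a i * y i) s,
    hIoi]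
  simp only [mul_sub, sum_sub_distrib]
  ring

variable {a u x y : ι → ℤ} {s : ι}

theorem sum_mul_le_sum_mul_of_lt_of_eqOn_Ioi (ha : ∀ i, 0 ≤ a i)
    (hsup : ∑ i ∈ Iio s, a i * u i ≤ a s) (hx : ∀ i, 0 ≤ x i) (hy : ∀ i, y i ≤ u i)
    (hlt : y s < x s) (htail : ∀ k, s < k → y k = x k) :
    ∑ i, a i * y i ≤ ∑ i, a i * x i := by
  have hgap : 0 ≤ a s * (x s - y s - 1) := mul_nonneg (ha s) (by omega)
  have hy' : 0 ≤ ∑ i ∈ Iio s, a i * (u i - y i) :=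
    sum_nonneg fun i _ => mul_nonneg (ha i) (sub_nonneg.mpr (hy i))
  have hx' : 0 ≤ ∑ i ∈ Iio s, a i * x i := sum_nonneg fun i _ => mul_nonneg (ha i) (hx i)
  linarith [sum_mul_sub_sum_mul_eq_of_eqOn_Ioi a u x y htail]

theorem sum_mul_eq_sum_mul_iff_of_lt_of_eqOn_Ioi (ha : ∀ i, 0 < a i)
    (hsup : ∑ i ∈ Iio s, a i * u i ≤ a s) (hx : ∀ i, 0 ≤ x i) (hy : ∀ i, y i ≤ u i)
    (hlt : y s < x s) (htail : ∀ k, s < k → y k = x k) :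
    ∑ i, a i * y i = ∑ i, a i * x i ↔
      a s = ∑ i ∈ Iio s, a i * u i ∧ y s = x s - 1 ∧
        ∀ i, i < s → y i = u i ∧ x i = 0 := by
  have hdiff := sum_mul_sub_sum_mul_eq_of_eqOn_Ioi a u x y htail
  have hgap : 0 ≤ a s * (x s - y s - 1) := mul_nonneg (ha s).le (by omega)
  have hy_nonneg : ∀ i ∈ Iio s, 0 ≤ a i * (u i - y i) :=
    fun i _ => mul_nonneg (ha i).le (sub_nonneg.mpr (hy i))
  have hx_nonneg : ∀ i ∈ Iio s, 0 ≤ a i * x i := fun i _ => mul_nonneg (ha i).le (hx i)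
  have hy_sum := sum_nonneg hy_nonneg
  have hx_sum := sum_nonneg hx_nonneg
  constructor
  · intro heq
    have hgap0 : a s * (x s - y s - 1) = 0 := by linarith
    have hy0 := (sum_eq_zero_iff_of_nonneg hy_nonneg).mp (by linarith)
    have hx0 := (sum_eq_zero_iff_of_nonneg hx_nonneg).mp (by linarith)
    refine ⟨by linarith, by linarith [(mul_eq_zero.mp hgap0).resolve_left (ha s).ne'],
      fun i hi => ?_⟩
    have hyi := (mul_eq_zero.mp (hy0 i (mem_Iio.mpr hi))).resolve_left (ha i).ne'
    exact ⟨by linarith, (mul_eq_zero.mp (hx0 i (mem_Iio.mpr hi))).resolve_left (ha i).ne'⟩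
  · rintro ⟨has, hys, hbelow⟩
    have hy0 : ∑ i ∈ Iio s, a i * (u i - y i) = 0 :=
      sum_eq_zero fun i hi => by rw [(hbelow i (mem_Iio.mp hi)).1, sub_self, mul_zero]
    have hx0 : ∑ i ∈ Iio s, a i * x i = 0 :=
      sum_eq_zero fun i hi => by rw [(hbelow i (mem_Iio.mp hi)).2, mul_zero]
    rw [hy0, hx0, hys, ← has] at hdiff
    linarith

end

theorem sum_Iio_le_of_superincreasing {n : ℕ} (c a : Fin n → ℤ) (ha : ∀ i, 0 ≤ a i)
    (hsi : ∀ i j : Fin n, (j : ℕ) = (i : ℕ) + 1 → ∑ k ∈ Iic i, c k ≤ a j)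
    (s : Fin n) :
    ∑ i ∈ Iio s, c i ≤ a s := by
  obtain hs | hs := Nat.eq_zero_or_pos s
  · have : Iio s = ∅ := Iio_eq_empty.mpr fun i _ => by simp [Fin.le_def, hs]
    simpa [this] using ha s
  · let t : Fin n := ⟨s - 1, by omega⟩
    have : Iio s = Iic t := by ext i; simp only [mem_Iio, mem_Iic, Fin.lt_def, Fin.le_def, t]; omega
    exact this ▸ hsi t s (by simp [t]; omega)

namespace lexLe

variable {n : ℕ} {x y : Fin n → ℤ}

theorem lt_of_ne (h : lexLe y x) {s : Fin n} (hne : y s ≠ x s)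
    (htail : ∀ k, s < k → y k = x k) : y s < x s := by
  obtain rfl | ⟨t, hlt, htail'⟩ := h
  · exact absurd rfl hne
  obtain hst | rfl | hts := lt_trichotomy s t
  · exact absurd (htail t hst) hlt.ne
  · exact hlt
  · exact absurd (htail' s hts) hne

theorem sum_mul_le (h : lexLe y x) {a u : Fin n → ℤ} (ha : ∀ i, 0 ≤ a i)
    (hsup : ∀ s, ∑ i ∈ Iio s, a i * u i ≤ a s) (hx : ∀ i, 0 ≤ x i)
    (hy : ∀ i, y i ≤ u i) :
    ∑ i, a i * y i ≤ ∑ i, a i * x i := by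
  obtain rfl | ⟨s, hlt, htail⟩ := h
  · exact le_rfl
  · exact sum_mul_le_sum_mul_of_lt_of_eqOn_Ioi ha (hsup s) hx hy hlt htail

end lexLe

theorem stmt_1_general {n : ℕ}
    (a u : Fin n → ℤ) (ha : ∀ i, 0 < a i) (hu : ∀ i, 1 ≤ u i)
    (b : ℤ)
    (hsi : ∀ i j : Fin n, (j : ℕ) = (i : ℕ) + 1 →
      ∑ k ∈ Finset.Iic i, a k * u k ≤ a j)
    (x y : Fin n → ℤ)
    (hx : ∀ i, 0 ≤ x i ∧ x i ≤ u i) (hxb : ∑ i, a i * x i ≤ b)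
    (hy : ∀ i, 0 ≤ y i ∧ y i ≤ u i)
    (hyx : lexLe y x) :
    (∑ i, a i * y i ≤ ∑ i, a i * x i) ∧ (∑ i, a i * y i ≤ b) ∧
    ∀ s : Fin n, y s ≠ x s → (∀ k, s < k → y k = x k) →
      ((∑ i, a i * y i = ∑ i, a i * x i ↔
          (a s = ∑ i ∈ Finset.Iio s, a i * u i ∧ y s = x s - 1 ∧
            ∀ i, i < s → y i = u i ∧ x i = 0)) ∧
        ((∀ i : Fin n,
            0 ≤ (if i < s then u i else if i = s then y i else x i) ∧
            (if i < s then u i else if i = s then y i else x i) ≤ u i) ∧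
          ∑ i, a i * (if i < s then u i else if i = s then y i else x i) ≤ b)) := by
  have hsup := sum_Iio_le_of_superincreasing _ a (fun i => (ha i).le) hsi
  have hle := hyx.sum_mul_le (fun i => (ha i).le) hsup (fun i => (hx i).1) (fun i => (hy i).2)
  refine ⟨hle, hle.trans hxb, fun s hne htail => ?_⟩
  have hlt := hyx.lt_of_ne hne htail
  set z : Fin n → ℤ := fun i => if i < s then u i else if i = s then y i else x i
  have hz : ∀ i, 0 ≤ z i ∧ z i ≤ u i := by
    intro i
    obtain hi | rfl | hi := lt_trichotomy i s
    · simpa [z, hi] using (zero_le_one.trans (hu i))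
    · simpa [z] using hy i
    · simpa [z, not_lt.mpr hi.le, hi.ne'] using hx i
  have hztail : ∀ k, s < k → z k = x k := fun k hk => by simp [z, not_lt.mpr hk.le, hk.ne']
  refine ⟨sum_mul_eq_sum_mul_iff_of_lt_of_eqOn_Ioi ha (hsup s) (fun i => (hx i).1)
    (fun i => (hy i).2) hlt htail, hz, le_trans ?_ hxb⟩
  exact sum_mul_le_sum_mul_of_lt_of_eqOn_Ioi (fun i => (ha i).le) (hsup s) (fun i => (hx i).1)
    (fun i => (hz i).2) (by simpa [z] using hlt) hztail

/-- for a superincreasing knapsack, if `x ∈ K`, `y ∈ rect u` and `y ⪯ x`,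
then `a·y ≤ a·x` (hence `y ∈ K`); moreover, if `s` is the largest index where `y` and `x`
differ, then the equality characterization (1) and the membership claim (2) hold. -/
theorem stmt_1 {n : ℕ} (hn : 1 ≤ n)
    (a u : Fin n → ℤ) (ha : ∀ i, 0 < a i) (hu : ∀ i, 1 ≤ u i)
    (b : ℤ) (hb : 0 < b)
    (hsi : ∀ i j : Fin n, (j : ℕ) = (i : ℕ) + 1 →
      ∑ k ∈ Finset.Iic i, a k * u k ≤ a j)
    (x y : Fin n → ℤ)
    (hx : ∀ i, 0 ≤ x i ∧ x i ≤ u i) (hxb : ∑ i, a i * x i ≤ b)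
    (hy : ∀ i, 0 ≤ y i ∧ y i ≤ u i)
    (hyx : lexLe y x) :
    (∑ i, a i * y i ≤ ∑ i, a i * x i) ∧ (∑ i, a i * y i ≤ b) ∧
    ∀ s : Fin n, y s ≠ x s → (∀ k, s < k → y k = x k) →
      ((∑ i, a i * y i = ∑ i, a i * x i ↔
          (a s = ∑ i ∈ Finset.Iio s, a i * u i ∧ y s = x s - 1 ∧
            ∀ i, i < s → y i = u i ∧ x i = 0)) ∧
        ((∀ i : Fin n,
            0 ≤ (if i < s then u i else if i = s then y i else x i) ∧
            (if i < s then u i else if i = s then y i else x i) ≤ u i) ∧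
          ∑ i, a i * (if i < s then u i else if i = s then y i else x i) ≤ b)) :=
  stmt_1_general a u ha hu b hsi x y hx hxb hy hyx
end

section
/- Assume {(a_i,u_i)}_{i=1}^n is superincreasing and a_i u_i ≤ b for all i (so that n ∈ I). For every j < n and every i ∈ I_j with i < n, writing next(i) = min{k ∈ I : k > i}, one has φ_j(next(i)) − φ_j(i) = φ_j(i)·(u_i − θ_i). Consequently, for every i ∈ I_j, φ_j(i) = u_j − θ_j + ∑_{k ∈ I_j, k < i} φ_j(k)·(u_k − θ_k). -/
open Finset

section NextInFilter

variable {α : Type*} [LinearOrder α] [LocallyFiniteOrder α] {p : α → Prop} [DecidablePred p]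

theorem Finset.filter_Ioo_eq_insert_of_next {j i ni : α} (hji : j < i) (hini : i < ni)
    (hi : p i) (hnext : ∀ k, i < k → p k → ni ≤ k) :
    (Ioo j ni).filter p = insert i ((Ioo j i).filter p) := by
  ext m
  simp only [mem_filter, mem_Ioo, mem_insert]
  constructor
  · rintro ⟨⟨hjm, hmni⟩, hm⟩
    rcases lt_trichotomy m i with hmi | rfl | him
    · exact Or.inr ⟨⟨hjm, hmi⟩, hm⟩
    · exact Or.inl rfl
    · exact absurd (hnext m him hm) (not_le.mpr hmni)
  · rintro (rfl | ⟨⟨hjm, hmi⟩, hm⟩)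
    · exact ⟨⟨hji, hini⟩, hi⟩
    · exact ⟨⟨hjm, hmi.trans hini⟩, hm⟩

theorem Finset.filter_lt_filter_Ioo {j i k : α} (hki : k ≤ i) :
    ((Ioo j i).filter p).filter (· < k) = (Ioo j k).filter p := by
  ext m
  simp only [mem_filter, mem_Ioo]
  exact ⟨fun ⟨⟨⟨hjm, _⟩, hm⟩, hmk⟩ => ⟨⟨hjm, hmk⟩, hm⟩,
    fun ⟨⟨hjm, hmk⟩, hm⟩ => ⟨⟨⟨hjm, hmk.trans_le hki⟩, hm⟩, hmk⟩⟩

end NextInFilter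

/-- Indices are 0-based, so the paper's `j < n` reads `(j : ℕ) + 1 < n`, and `ni` is `next(i)`. -/
theorem stmt_5_general {n : ℕ}
    (u : Fin n → ℤ)
    (θ : Fin n → ℤ)
    (φ : Fin n → Fin n → ℤ)
    (hφ : ∀ j i : Fin n, φ j i =
      (u j - θ j) * ∏ k ∈ (Finset.Ioo j i).filter (fun k => 1 ≤ θ k), (u k + 1 - θ k)) :
    (∀ j i ni : Fin n, (j : ℕ) + 1 < n → j < i → 1 ≤ θ i → (i : ℕ) + 1 < n →
      i < ni → 1 ≤ θ ni → (∀ k, i < k → 1 ≤ θ k → ni ≤ k) →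
      φ j ni - φ j i = φ j i * (u i - θ i)) ∧
    (∀ j i : Fin n, (j : ℕ) + 1 < n → j < i → 1 ≤ θ i →
      φ j i = u j - θ j +
        ∑ k ∈ (Finset.Ioo j i).filter (fun k => 1 ≤ θ k), φ j k * (u k - θ k)) := by
  constructor
  · intro j i ni _ hji hθi _ hini _ hnext
    rw [hφ j ni, hφ j i, filter_Ioo_eq_insert_of_next hji hini hθi hnext,
      prod_insert (by simp)]
    ring
  · intro j i _ _ _
    set S := (Ioo j i).filter (fun k => 1 ≤ θ k)
    -- Group the expansion of `∏ (1 + (u k - θ k))` by the largest `k` whose `u k - θ k` is chosen.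
    have hexpand : ∏ k ∈ S, (u k + 1 - θ k) =
        1 + ∑ k ∈ S, (u k - θ k) * ∏ m ∈ S with m < k, (u m + 1 - θ m) := by
      simpa only [prod_const_one, mul_one, add_comm (1 : ℤ), sub_add_eq_add_sub] using
        prod_add_ordered S (fun _ => (1 : ℤ)) (fun k => u k - θ k)
    have hterm : ∀ k ∈ S, φ j k * (u k - θ k) =
        (u j - θ j) * ((u k - θ k) * ∏ m ∈ S with m < k, (u m + 1 - θ m)) := by
      intro k hk
      rw [hφ j k, filter_lt_filter_Ioo (mem_Ioo.mp (mem_filter.mp hk).1).2.le]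
      ring
    rw [sum_congr rfl hterm, ← mul_sum, hφ j i, hexpand]
    ring

/-- recursion identities for the coefficients `φ_j` of the packing
inequalities.  Indices are `Fin n` (0-based), so "`j < n`" of the paper (1-based) reads
`(j : ℕ) + 1 < n`, and `ni = next i` is the smallest element of `I` above `i`. -/
theorem stmt_5 {n : ℕ} (hn : 1 ≤ n)
    (a u : Fin n → ℤ) (ha : ∀ i, 0 < a i) (hu : ∀ i, 1 ≤ u i)
    (b : ℤ) (hb : 0 < b)
    (hub : ∀ i, a i * u i ≤ b)
    (hsi : ∀ i j : Fin n, (j : ℕ) = (i : ℕ) + 1 →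
      ∑ k ∈ Finset.Iic i, a k * u k ≤ a j)
    (θ : Fin n → ℤ)
    (hθ : ∀ i : Fin n,
      θ i = min (u i) ((b - ∑ k ∈ Finset.Ioi i, a k * θ k).fdiv (a i)))
    (φ : Fin n → Fin n → ℤ)
    (hφ : ∀ j i : Fin n, φ j i =
      (u j - θ j) * ∏ k ∈ (Finset.Ioo j i).filter (fun k => 1 ≤ θ k), (u k + 1 - θ k)) :
    (∀ j i ni : Fin n, (j : ℕ) + 1 < n → j < i → 1 ≤ θ i → (i : ℕ) + 1 < n →
      i < ni → 1 ≤ θ ni → (∀ k, i < k → 1 ≤ θ k → ni ≤ k) →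
      φ j ni - φ j i = φ j i * (u i - θ i)) ∧
    (∀ j i : Fin n, (j : ℕ) + 1 < n → j < i → 1 ≤ θ i →
      φ j i = u j - θ j +
        ∑ k ∈ (Finset.Ioo j i).filter (fun k => 1 ≤ θ k), φ j k * (u k - θ k)) :=
  stmt_5_general u θ φ hφ
end

section
/- Assume {(a_i,u_i)}_{i=1}^n is superincreasing and a_i u_i ≤ b for all i. Then for every j ∈ {1,…,n} and every x ∈ K, the packing inequality holds: x_j + ∑_{i ∈ I_j} φ_j(i)·(x_i − θ_i) ≤ θ_j. In particular every packing inequality is valid for conv(K). -/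
/-!
Reading coordinates from `n` down to `1`, the greedy solution `θ` is the lexicographically largest
point of `K`: if `x ∈ K` agrees with `θ` above `k`, then `x k ≤ θ k`. Given `x ∈ K` that differs
from `θ` somewhere above `j`, let `m` be the largest such index; then `x m ≤ θ m - 1`, so `m ∈ I`.
Bounding `x i - θ i` by `u i - θ i` for `i < m`, the coefficients telescope,
`∑_{i ∈ I, j < i < m} φ_j(i) (u i - θ i) = φ_j(m) - (u j - θ j)`, and the term of index `m`
cancels `φ_j(m)`, leaving `x j - (u j - θ j) ≤ θ j`. Validity for `conv K` follows because the
inequality cuts out a half-space.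
-/

noncomputable def toReal {n : ℕ} (x : Fin n → ℤ) : Fin n → ℝ := fun i => (x i : ℝ)

open Finset

section Greedy

variable {ι : Type*} [Fintype ι] [LinearOrder ι] [LocallyFiniteOrderTop ι]

theorem le_greedy_of_eq_on_Ioi {a u x θ : ι → ℤ} {b : ℤ} (ha : ∀ i, 0 < a i)
    (hx : ∀ i, 0 ≤ x i ∧ x i ≤ u i) (hxb : ∑ i, a i * x i ≤ b) {k : ι}
    (hθk : θ k = min (u k) ((b - ∑ i ∈ Ioi k, a i * θ i).fdiv (a k)))
    (hagree : ∀ i, k < i → x i = θ i) : x k ≤ θ k := by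
  have htail : ∑ i ∈ Ioi k, a i * θ i = ∑ i ∈ Ioi k, a i * x i :=
    sum_congr rfl fun i hi => by rw [hagree i (mem_Ioi.mp hi)]
  have hhead : a k * x k + ∑ i ∈ Ioi k, a i * x i ≤ ∑ i, a i * x i := by
    rw [← sum_insert (f := fun i => a i * x i) (by simp : k ∉ Ioi k)]
    exact sum_le_sum_of_subset_of_nonneg (subset_univ _)
      fun i _ _ => mul_nonneg (ha i).le (hx i).1
  rw [hθk, htail, Int.fdiv_eq_ediv_of_nonneg _ (ha k).le]
  exact le_min (hx k).2 ((Int.le_ediv_iff_mul_le (ha k)).2 (by linarith))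

end Greedy

section Packing

variable {ι : Type*} [LinearOrder ι] [LocallyFiniteOrder ι]

/-- The coefficient `φ_j(i)`; the filter `1 ≤ θ k` is membership in `I`. -/
def packingCoeff (u θ : ι → ℤ) (j i : ι) : ℤ :=
  (u j - θ j) * ∏ k ∈ (Ioo j i).filter (fun k => 1 ≤ θ k), (u k + 1 - θ k)

theorem packingCoeff_nonneg {u θ : ι → ℤ} (hθu : ∀ i, θ i ≤ u i) (j i : ι) :
    0 ≤ packingCoeff u θ j i :=
  mul_nonneg (sub_nonneg.2 (hθu j)) (prod_nonneg fun k _ => by linarith [hθu k])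

theorem sum_packingCoeff_mul_sub (u θ : ι → ℤ) (j m : ι) :
    ∑ i ∈ (Ioo j m).filter (fun k => 1 ≤ θ k), packingCoeff u θ j i * (u i - θ i) =
      packingCoeff u θ j m - (u j - θ j) := by
  set S := (Ioo j m).filter (fun k => 1 ≤ θ k)
  have hS : ∀ i ∈ S, (Ioo j i).filter (fun k => 1 ≤ θ k) = S.filter (· < i) := by
    intro i hi
    have him : i < m := (mem_Ioo.1 (mem_filter.1 hi).1).2
    ext k
    simp only [S, mem_filter, mem_Ioo]
    constructor
    · rintro ⟨⟨hjk, hki⟩, hk⟩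
      exact ⟨⟨⟨hjk, hki.trans him⟩, hk⟩, hki⟩
    · rintro ⟨⟨⟨hjk, _⟩, hk⟩, hki⟩
      exact ⟨⟨hjk, hki⟩, hk⟩
  have hfac : ∀ k, u k + 1 - θ k = 1 + (u k - θ k) := fun k => by ring
  simp only [packingCoeff, hfac]
  rw [sum_congr rfl fun i hi => by rw [hS i hi], prod_one_add_ordered, mul_add, mul_one,
    add_sub_cancel_left, mul_sum]
  exact sum_congr rfl fun i _ => by ring

variable [LocallyFiniteOrderTop ι]

theorem sum_packingCoeff_mul_sub_le {u θ x : ι → ℤ} (hθu : ∀ i, θ i ≤ u i)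
    (hxu : ∀ i, x i ≤ u i) {j m : ι} (hjm : j < m) (hθm : 1 ≤ θ m) (hxm : x m < θ m)
    (hagree : ∀ i, m < i → x i = θ i) :
    ∑ i ∈ (Ioi j).filter (fun i => 1 ≤ θ i), packingCoeff u θ j i * (x i - θ i) ≤
      -(u j - θ j) := by
  set T := (Ioi j).filter (fun i => 1 ≤ θ i)
  have hmT : m ∈ T := mem_filter.2 ⟨mem_Ioi.2 hjm, hθm⟩
  have hbelow : T.filter (· < m) = (Ioo j m).filter (fun k => 1 ≤ θ k) := by
    ext i
    simp only [T, mem_filter, mem_Ioi, mem_Ioo]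
    tauto
  have hrest : ∑ i ∈ T.filter (¬ · < m), packingCoeff u θ j i * (x i - θ i) =
      packingCoeff u θ j m * (x m - θ m) := by
    refine sum_eq_single_of_mem m (mem_filter.2 ⟨hmT, lt_irrefl m⟩) fun i hi him => ?_
    have hmi : m < i := lt_of_le_of_ne (not_lt.1 (mem_filter.1 hi).2) (Ne.symm him)
    rw [hagree i hmi, sub_self, mul_zero]
  have hslack : ∑ i ∈ T.filter (· < m), packingCoeff u θ j i * (x i - θ i) ≤
      packingCoeff u θ j m - (u j - θ j) := by
    rw [← sum_packingCoeff_mul_sub u θ j m, ← hbelow]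
    exact sum_le_sum fun i _ =>
      mul_le_mul_of_nonneg_left (sub_le_sub_right (hxu i) _) (packingCoeff_nonneg hθu j i)
  have hlast : packingCoeff u θ j m * (x m - θ m) ≤ -packingCoeff u θ j m := by
    nlinarith [packingCoeff_nonneg hθu j m]
  rw [← sum_filter_add_sum_filter_not T (· < m), hrest]
  linarith

theorem add_sum_packingCoeff_mul_sub_le {u θ x : ι → ℤ} (hθu : ∀ i, θ i ≤ u i)
    (hx : ∀ i, 0 ≤ x i ∧ x i ≤ u i) (hlex : ∀ k, (∀ i, k < i → x i = θ i) → x k ≤ θ k)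
    (j : ι) :
    x j + ∑ i ∈ (Ioi j).filter (fun i => 1 ≤ θ i), packingCoeff u θ j i * (x i - θ i) ≤
      θ j := by
  classical
  by_cases hagree : ∀ i, j < i → x i = θ i
  · rw [sum_eq_zero fun i hi => by rw [hagree i (mem_Ioi.1 (mem_filter.1 hi).1), sub_self,
      mul_zero], add_zero]
    exact hlex j hagree
  push Not at hagree
  obtain ⟨i₀, hji₀, hi₀⟩ := hagree
  obtain ⟨m, hmD, hmax⟩ := exists_max_image ((Ioi j).filter fun i => x i ≠ θ i) id
    ⟨i₀, mem_filter.2 ⟨mem_Ioi.2 hji₀, hi₀⟩⟩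
  obtain ⟨hjm, hxθm⟩ := mem_filter.1 hmD
  have hagree_m : ∀ i, m < i → x i = θ i := fun i hmi => by
    by_contra hne
    exact (hmax i (mem_filter.2 ⟨mem_Ioi.2 ((mem_Ioi.1 hjm).trans hmi), hne⟩)).not_gt hmi
  have hxm : x m < θ m := lt_of_le_of_ne (hlex m hagree_m) hxθm
  have := sum_packingCoeff_mul_sub_le hθu (fun i => (hx i).2) (mem_Ioi.1 hjm)
    (by linarith [(hx m).1]) hxm hagree_m
  linarith [(hx j).2]

end Packing

theorem convex_setOf_add_sum_mul_sub_le {ι : Type*} (j : ι) (T : Finset ι) (c t : ι → ℝ)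
    (r : ℝ) : Convex ℝ {y : ι → ℝ | y j + ∑ i ∈ T, c i * (y i - t i) ≤ r} := by
  let ℓ : (ι → ℝ) →ₗ[ℝ] ℝ := LinearMap.proj (R := ℝ) (φ := fun _ : ι => ℝ) j +
    ∑ i ∈ T, c i • LinearMap.proj i
  have hset : {y : ι → ℝ | y j + ∑ i ∈ T, c i * (y i - t i) ≤ r} =
      {y | ℓ y ≤ r + ∑ i ∈ T, c i * t i} := by
    ext y
    simp only [mul_sub, sum_sub_distrib, Set.mem_ofPred_eq, LinearMap.add_apply,
      LinearMap.coe_proj, Function.eval, LinearMap.coe_sum, LinearMap.coe_smul, Finset.sum_apply,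
      Pi.smul_apply, smul_eq_mul, ℓ]
    constructor <;> intro h <;> linarith
  rw [hset]
  exact convex_halfSpace_le ℓ.isLinear _

theorem stmt_6_general {n : ℕ}
    (a u : Fin n → ℤ) (ha : ∀ i, 0 < a i)
    (b : ℤ)
    (θ : Fin n → ℤ)
    (hθ : ∀ i : Fin n,
      θ i = min (u i) ((b - ∑ k ∈ Finset.Ioi i, a k * θ k).fdiv (a i)))
    (φ : Fin n → Fin n → ℤ)
    (hφ : ∀ j i : Fin n, φ j i =
      (u j - θ j) * ∏ k ∈ (Finset.Ioo j i).filter (fun k => 1 ≤ θ k), (u k + 1 - θ k)) :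
    (∀ j : Fin n, ∀ x : Fin n → ℤ, (∀ i, 0 ≤ x i ∧ x i ≤ u i) → ∑ i, a i * x i ≤ b →
      x j + ∑ i ∈ (Finset.Ioi j).filter (fun i => 1 ≤ θ i), φ j i * (x i - θ i) ≤ θ j) ∧
    (∀ j : Fin n, ∀ y : Fin n → ℝ,
      y ∈ convexHull ℝ (toReal ''
        {x : Fin n → ℤ | (∀ i, 0 ≤ x i ∧ x i ≤ u i) ∧ ∑ i, a i * x i ≤ b}) →
      y j + ∑ i ∈ (Finset.Ioi j).filter (fun i => 1 ≤ θ i),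
        (φ j i : ℝ) * (y i - (θ i : ℝ)) ≤ (θ j : ℝ)) := by
  obtain rfl : φ = packingCoeff u θ := funext₂ hφ
  have hθu : ∀ i, θ i ≤ u i := fun i => (hθ i).trans_le (min_le_left _ _)
  have hK : ∀ j (x : Fin n → ℤ), (∀ i, 0 ≤ x i ∧ x i ≤ u i) → ∑ i, a i * x i ≤ b →
      x j + ∑ i ∈ (Ioi j).filter (fun i => 1 ≤ θ i), packingCoeff u θ j i * (x i - θ i) ≤
        θ j := fun j x hx hxb =>
    add_sum_packingCoeff_mul_sub_le hθu hx
      (fun k => le_greedy_of_eq_on_Ioi ha hx hxb (hθ k)) j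
  refine ⟨hK, fun j y hy => convexHull_min ?_ (convex_setOf_add_sum_mul_sub_le _ _ _ _ _) hy⟩
  rintro _ ⟨x, ⟨hx, hxb⟩, rfl⟩
  simp only [Set.mem_ofPred_eq, toReal]
  exact_mod_cast hK j x hx hxb

/-- validity of the packing inequalities: for every `j` and every `x ∈ K`,
`x j + ∑_{i ∈ I_j} φ j i * (x i - θ i) ≤ θ j`; in particular each packing inequality is
valid for the convex hull of `K` (viewed in `ℝⁿ`). -/
theorem stmt_6 {n : ℕ} (hn : 1 ≤ n)
    (a u : Fin n → ℤ) (ha : ∀ i, 0 < a i) (hu : ∀ i, 1 ≤ u i)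
    (b : ℤ) (hb : 0 < b)
    (hub : ∀ i, a i * u i ≤ b)
    (hsi : ∀ i j : Fin n, (j : ℕ) = (i : ℕ) + 1 →
      ∑ k ∈ Finset.Iic i, a k * u k ≤ a j)
    (θ : Fin n → ℤ)
    (hθ : ∀ i : Fin n,
      θ i = min (u i) ((b - ∑ k ∈ Finset.Ioi i, a k * θ k).fdiv (a i)))
    (φ : Fin n → Fin n → ℤ)
    (hφ : ∀ j i : Fin n, φ j i =
      (u j - θ j) * ∏ k ∈ (Finset.Ioo j i).filter (fun k => 1 ≤ θ k), (u k + 1 - θ k)) :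
    (∀ j : Fin n, ∀ x : Fin n → ℤ, (∀ i, 0 ≤ x i ∧ x i ≤ u i) → ∑ i, a i * x i ≤ b →
      x j + ∑ i ∈ (Finset.Ioi j).filter (fun i => 1 ≤ θ i), φ j i * (x i - θ i) ≤ θ j) ∧
    (∀ j : Fin n, ∀ y : Fin n → ℝ,
      y ∈ convexHull ℝ (toReal ''
        {x : Fin n → ℤ | (∀ i, 0 ≤ x i ∧ x i ≤ u i) ∧ ∑ i, a i * x i ≤ b}) →
      y j + ∑ i ∈ (Finset.Ioi j).filter (fun i => 1 ≤ θ i),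
        (φ j i : ℝ) * (y i - (θ i : ℝ)) ≤ (θ j : ℝ)) :=
  stmt_6_general a u ha b θ hθ φ hφ
end

section
/- Assume {(a_i,u_i)}_{i=1}^n is superincreasing and a_i u_i ≤ b for all i. Let j ∈ {1,…,n} with θ_j < u_j, let i ∈ I_j, and let x̂ ∈ rect(u) satisfy x̂_k = θ_k for all k ∈ I_j with k > i. (1) If x̂_j = u_j, x̂_k = u_k for all k ∈ I_j with k < i, and x̂_i = θ_i − 1, then x̂ satisfies the packing inequality for j with equality: x̂_j + ∑_{k ∈ I_j} φ_j(k)(x̂_k − θ_k) = θ_j. (2) If x̂_i ≤ θ_i − 2, then x̂_j + ∑_{k ∈ I_j} φ_j(k)(x̂_k − θ_k) < θ_j; in particular x̂ does not lie on the face F_j = {x ∈ conv(K) : x_j + ∑_{k ∈ I_j} φ_j(k)(x_k − θ_k) = θ_j}. -/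
open Finset

section OrderedProducts

variable {ι R : Type*} [LinearOrder ι]

theorem sum_prod_filter_lt_mul_sub_one [CommRing R] (s : Finset ι) (w : ι → R) :
    ∑ k ∈ s, (∏ m ∈ s with m < k, w m) * (w k - 1) = ∏ k ∈ s, w k - 1 := by
  have h := prod_one_sub_ordered s (fun k => 1 - w k)
  simp only [sub_sub_cancel] at h
  rw [h, sub_sub_cancel_left, ← sum_neg_distrib]
  exact sum_congr rfl fun k _ => by ring

theorem sum_prod_filter_lt_mul_le [CommRing R] [PartialOrder R] [IsOrderedRing R]
    (s : Finset ι) (w y : ι → R) (hw : ∀ k ∈ s, 0 ≤ w k) (hy : ∀ k ∈ s, y k ≤ w k - 1) :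
    ∑ k ∈ s, (∏ m ∈ s with m < k, w m) * y k ≤ ∏ k ∈ s, w k - 1 := by
  rw [← sum_prod_filter_lt_mul_sub_one]
  refine sum_le_sum fun k hk => mul_le_mul_of_nonneg_left (hy k hk) ?_
  exact prod_nonneg fun m hm => hw m (mem_filter.mp hm).1

end OrderedProducts

theorem sum_Ioi_filter_prod_Ioo_mul_eq {ι R : Type*} [LinearOrder ι] [LocallyFiniteOrder ι]
    [LocallyFiniteOrderTop ι] [CommSemiring R] (p : ι → Prop) [DecidablePred p] (w y : ι → R)
    {j i : ι} (hji : j < i) (hpi : p i) (hy : ∀ k, i < k → p k → y k = 0) :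
    ∑ k ∈ Ioi j with p k, (∏ m ∈ Ioo j k with p m, w m) * y k =
      ∑ k ∈ (Ioo j i).filter p, (∏ m ∈ (Ioo j i).filter p with m < k, w m) * y k +
        (∏ m ∈ (Ioo j i).filter p, w m) * y i := by
  set S := (Ioo j i).filter p
  have hS : insert i S ⊆ {k ∈ Ioi j | p k} := by
    intro k
    simp only [S, mem_insert, mem_filter, mem_Ioo, mem_Ioi]
    grind
  have hbeyond : ∀ k ∈ {k ∈ Ioi j | p k}, k ∉ insert i S →
      (∏ m ∈ Ioo j k with p m, w m) * y k = 0 := by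
    intro k
    simp only [S, mem_insert, mem_filter, mem_Ioo, mem_Ioi]
    intro hk hkS
    rw [hy k (by grind) hk.2, mul_zero]
  rw [← sum_subset hS hbeyond, sum_insert (by simp [S]), add_comm]
  congr 1
  refine sum_congr rfl fun k hk => ?_
  congr 2
  ext m
  simp only [S, mem_filter, mem_Ioo] at hk ⊢
  grind

theorem stmt_8_general {n : ℕ}
    (a u : Fin n → ℤ)
    (b : ℤ)
    (θ : Fin n → ℤ)
    (hθ : ∀ i : Fin n,
      θ i = min (u i) ((b - ∑ k ∈ Finset.Ioi i, a k * θ k).fdiv (a i)))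
    (φ : Fin n → Fin n → ℤ)
    (hφ : ∀ j i : Fin n, φ j i =
      (u j - θ j) * ∏ k ∈ (Finset.Ioo j i).filter (fun k => 1 ≤ θ k), (u k + 1 - θ k))
    (j i : Fin n) (hju : θ j < u j) (hji : j < i) (hθi : 1 ≤ θ i)
    (xh : Fin n → ℤ) (hxh : ∀ k, 0 ≤ xh k ∧ xh k ≤ u k)
    (hfix : ∀ k, i < k → 1 ≤ θ k → xh k = θ k) :
    ((xh j = u j → (∀ k, j < k → k < i → 1 ≤ θ k → xh k = u k) → xh i = θ i - 1 →
      xh j + ∑ k ∈ (Finset.Ioi j).filter (fun k => 1 ≤ θ k), φ j k * (xh k - θ k)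
        = θ j)) ∧
    (xh i ≤ θ i - 2 →
      (xh j + ∑ k ∈ (Finset.Ioi j).filter (fun k => 1 ≤ θ k), φ j k * (xh k - θ k)
        < θ j) ∧
      toReal xh ∉ {y : Fin n → ℝ |
        y ∈ convexHull ℝ (toReal ''
          {x : Fin n → ℤ | (∀ t, 0 ≤ x t ∧ x t ≤ u t) ∧ ∑ t, a t * x t ≤ b}) ∧
        y j + ∑ k ∈ (Finset.Ioi j).filter (fun k => 1 ≤ θ k),
          (φ j k : ℝ) * (y k - (θ k : ℝ)) = (θ j : ℝ)}) := by
  set S := (Ioo j i).filter (fun k => 1 ≤ θ k)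
  set w : Fin n → ℤ := fun k => u k + 1 - θ k
  have hw : ∀ k, 1 ≤ w k := fun k => by
    have := (hθ k).trans_le (min_le_left _ _)
    simp only [w]
    omega
  have hsum : ∑ k ∈ (Ioi j).filter (fun k => 1 ≤ θ k), φ j k * (xh k - θ k) =
      (u j - θ j) * (∑ k ∈ S, (∏ m ∈ S with m < k, w m) * (xh k - θ k) +
        (∏ m ∈ S, w m) * (xh i - θ i)) := by
    simp_rw [hφ j, mul_assoc, ← mul_sum]
    congr 1
    exact sum_Ioi_filter_prod_Ioo_mul_eq _ w _ hji hθi fun k hik hk => by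
      rw [hfix k hik hk, sub_self]
  constructor
  · intro hxj hxS hxi
    have hfull : ∑ k ∈ S, (∏ m ∈ S with m < k, w m) * (xh k - θ k) = ∏ m ∈ S, w m - 1 := by
      rw [← sum_prod_filter_lt_mul_sub_one]
      refine sum_congr rfl fun k hk => ?_
      obtain ⟨hk, hθk⟩ := mem_filter.mp hk
      rw [hxS k (mem_Ioo.mp hk).1 (mem_Ioo.mp hk).2 hθk]
      ring
    rw [hsum, hfull, hxj, hxi]
    ring
  · intro hxi
    have hpartial := sum_prod_filter_lt_mul_le S w (fun k => xh k - θ k)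
      (fun k _ => by linarith [hw k]) (fun k _ => by linarith [(hxh k).2])
    have hDW : 0 < (u j - θ j) * ∏ m ∈ S, w m :=
      mul_pos (by omega) (prod_pos fun m _ => by linarith [hw m])
    have hlt : xh j + ∑ k ∈ (Ioi j).filter (fun k => 1 ≤ θ k), φ j k * (xh k - θ k) < θ j := by
      rw [hsum]
      nlinarith [(hxh j).2]
    refine ⟨hlt, fun ⟨_, hface⟩ => hlt.ne ?_⟩
    simp only [toReal] at hface
    exact_mod_cast hface

/-- points on / off the face defined by the `j`-th packing inequality.
Let `θ j < u j`, `i ∈ I_j`, and let `x̂ ∈ rect u` agree with `θ` on all `k ∈ I_j` with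
`k > i`.  (1) If `x̂ j = u j`, `x̂ k = u k` for `k ∈ I_j` with `k < i`, and
`x̂ i = θ i - 1`, then the packing inequality for `j` is tight at `x̂`.  (2) If
`x̂ i ≤ θ i - 2`, then it is strict, and `x̂` is not on the face `F_j`. -/
theorem stmt_8 {n : ℕ} (hn : 1 ≤ n)
    (a u : Fin n → ℤ) (ha : ∀ i, 0 < a i) (hu : ∀ i, 1 ≤ u i)
    (b : ℤ) (hb : 0 < b)
    (hub : ∀ i, a i * u i ≤ b)
    (hsi : ∀ i j : Fin n, (j : ℕ) = (i : ℕ) + 1 →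
      ∑ k ∈ Finset.Iic i, a k * u k ≤ a j)
    (θ : Fin n → ℤ)
    (hθ : ∀ i : Fin n,
      θ i = min (u i) ((b - ∑ k ∈ Finset.Ioi i, a k * θ k).fdiv (a i)))
    (φ : Fin n → Fin n → ℤ)
    (hφ : ∀ j i : Fin n, φ j i =
      (u j - θ j) * ∏ k ∈ (Finset.Ioo j i).filter (fun k => 1 ≤ θ k), (u k + 1 - θ k))
    (j i : Fin n) (hju : θ j < u j) (hji : j < i) (hθi : 1 ≤ θ i)
    (xh : Fin n → ℤ) (hxh : ∀ k, 0 ≤ xh k ∧ xh k ≤ u k)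
    (hfix : ∀ k, i < k → 1 ≤ θ k → xh k = θ k) :
    ((xh j = u j → (∀ k, j < k → k < i → 1 ≤ θ k → xh k = u k) → xh i = θ i - 1 →
      xh j + ∑ k ∈ (Finset.Ioi j).filter (fun k => 1 ≤ θ k), φ j k * (xh k - θ k)
        = θ j)) ∧
    (xh i ≤ θ i - 2 →
      (xh j + ∑ k ∈ (Finset.Ioi j).filter (fun k => 1 ≤ θ k), φ j k * (xh k - θ k)
        < θ j) ∧
      toReal xh ∉ {y : Fin n → ℝ |
        y ∈ convexHull ℝ (toReal ''
          {x : Fin n → ℤ | (∀ t, 0 ≤ x t ∧ x t ≤ u t) ∧ ∑ t, a t * x t ≤ b}) ∧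
        y j + ∑ k ∈ (Finset.Ioi j).filter (fun k => 1 ≤ θ k),
          (φ j k : ℝ) * (y k - (θ k : ℝ)) = (θ j : ℝ)}) :=
  stmt_8_general a u b θ hθ φ hφ j i hju hji hθi xh hxh hfix
end

section
/- Let n ≥ 1, let u ∈ ℤⁿ with u_i ≥ 1 for all i, and let γ, θ ∈ rect(u) with γ ⪯ θ. Then conv({x ∈ rect(u) : γ ⪯ x ⪯ θ}) = conv({x ∈ rect(u) : γ ⪯ x}) ∩ conv({x ∈ rect(u) : x ⪯ θ}); that is, the convex hull operator distributes over the intersection of the ⪰-set and the ⪯-set. -/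
/-!
Homogenize: `layer S w` is the set of nonnegative combinations of points of `S` of total weight
`w`, so that `layer S 1` is the convex hull of `S` and weights add up. Split off the most
significant coordinate: with `g = γₙ`, `t = θₙ`, `m = uₙ`, the set `{x ⪰ γ}` is
`{x' ⪰ γ'} × {g}` together with `rect u' × [g + 1, m]`, the set `{x ⪯ θ}` is `{x' ⪯ θ'} × {t}`
together with `rect u' × [0, t - 1]`, and the band is a union of three such slabs (or
`band' × {g}` if `g = t`). A point of both hulls thus splits into lower-dimensional pieces, but
recombining them needs a stronger induction hypothesis: for `c ≥ 0`,
`(a • L + (b + c) • B) ∩ (b • U + (a + c) • B) ⊆ a • L + b • U + c • B`,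
where `L`, `U`, `B` are the hulls of `{x ⪰ γ}`, `{x ⪯ θ}` and the box. In each step only the
last coordinate has to be matched, by moving weight from `L` or `U` to the box; how much is
found by the intermediate value theorem.
-/

open Set Pointwise

namespace LexRect

variable {n : ℕ}

section Layer

noncomputable def cone (S : Set (Fin n → ℤ)) : PointedCone ℝ (ℝ × (Fin n → ℝ)) :=
  PointedCone.hull ℝ ((fun p => ((1 : ℝ), toReal p)) '' S)

/-- For `w > 0` this is `w • convexHull ℝ (toReal '' S)` (`mem_layer_iff`), but `layer S 0 = {0}`
even for empty `S`, which lets `layer_add` and `mem_layer_union_iff` hold unconditionally. -/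
def layer (S : Set (Fin n → ℤ)) (w : ℝ) : Set (Fin n → ℝ) := {y | (w, y) ∈ cone S}

variable {S T : Set (Fin n → ℤ)} {w a b : ℝ} {y z : Fin n → ℝ}

theorem mem_layer_iff :
    y ∈ layer S w ↔ w = 0 ∧ y = 0 ∨ 0 < w ∧ y ∈ w • convexHull ℝ (toReal '' S) := by
  constructor
  · intro hy
    refine Submodule.span_induction (p := fun v _ => v.1 = 0 ∧ v.2 = 0 ∨
      0 < v.1 ∧ v.2 ∈ v.1 • convexHull ℝ (toReal '' S)) ?_ ?_ ?_ ?_ hy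
    · rintro _ ⟨p, hp, rfl⟩
      exact Or.inr ⟨one_pos, by simpa using subset_convexHull ℝ _ (mem_image_of_mem _ hp)⟩
    · exact Or.inl ⟨rfl, rfl⟩
    · rintro v v' - - (⟨h1, h2⟩ | ⟨h1, h2⟩) (⟨h1', h2'⟩ | ⟨h1', h2'⟩)
      · exact Or.inl ⟨by simp [h1, h1'], by simp [h2, h2']⟩
      · exact Or.inr ⟨by simpa [h1] using h1', by simpa [h1, h2] using h2'⟩
      · exact Or.inr ⟨by simpa [h1'] using h1, by simpa [h1', h2'] using h2⟩
      · refine Or.inr ⟨add_pos h1 h1', ?_⟩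
        rw [Prod.fst_add, Prod.snd_add,
          (convex_convexHull ℝ _).add_smul h1.le h1'.le]
        exact add_mem_add h2 h2'
    · rintro ⟨r, hr⟩ v - (⟨h1, h2⟩ | ⟨h1, h2⟩)
      · exact Or.inl ⟨by simp [h1], by simp [h2]⟩
      · rcases hr.eq_or_lt with rfl | hr
        · exact Or.inl ⟨by simp, by simp⟩
        · refine Or.inr ⟨by simpa using mul_pos hr h1, ?_⟩
          simpa [mul_smul] using smul_mem_smul_set (a := r) h2
  · rintro (⟨rfl, rfl⟩ | ⟨hw, z, hz, rfl⟩)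
    · exact (cone S).zero_mem
    · have hconv : Convex ℝ {z | ((1 : ℝ), z) ∈ cone S} := by
        intro z₁ h₁ z₂ h₂ s t hs ht hst
        have := (cone S).convex h₁ h₂ hs ht hst
        simpa [hst] using this
      have h1 : ((1 : ℝ), z) ∈ cone S :=
        convexHull_min (by rintro _ ⟨p, hp, rfl⟩; exact Submodule.subset_span ⟨p, hp, rfl⟩)
          hconv hz
      simpa [layer] using (cone S).smul_mem hw.le h1

theorem layer_one : layer S 1 = convexHull ℝ (toReal '' S) := by
  ext y; simp [mem_layer_iff]

theorem nonneg_of_mem_layer (hy : y ∈ layer S w) : 0 ≤ w := by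
  rcases mem_layer_iff.1 hy with ⟨rfl, -⟩ | ⟨hw, -⟩
  exacts [le_rfl, hw.le]

theorem eq_zero_of_mem_layer_zero (hy : y ∈ layer S 0) : y = 0 := by
  rcases mem_layer_iff.1 hy with ⟨-, rfl⟩ | ⟨hw, -⟩
  exacts [rfl, absurd hw (lt_irrefl 0)]

theorem zero_mem_layer_zero : (0 : Fin n → ℝ) ∈ layer S 0 := (cone S).zero_mem

theorem layer_zero : layer S 0 = {0} :=
  Subset.antisymm (fun _ hy => eq_zero_of_mem_layer_zero hy) (by simpa using zero_mem_layer_zero)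

theorem smul_toReal_mem_layer {p : Fin n → ℤ} (hp : p ∈ S) (hw : 0 ≤ w) :
    w • toReal p ∈ layer S w := by
  simpa [layer] using (cone S).smul_mem hw (Submodule.subset_span ⟨p, hp, rfl⟩)

theorem mem_layer_fin_zero {S : Set (Fin 0 → ℤ)} {p : Fin 0 → ℤ} (hp : p ∈ S) (hw : 0 ≤ w)
    (x : Fin 0 → ℝ) : x ∈ layer S w := by
  rw [Subsingleton.elim x (w • toReal p)]
  exact smul_toReal_mem_layer hp hw

theorem layer_mono (h : S ⊆ T) : layer S w ⊆ layer T w :=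
  fun _ hy => Submodule.span_mono (image_mono h) hy

theorem add_mem_layer (hy : y ∈ layer S a) (hz : z ∈ layer S b) : y + z ∈ layer S (a + b) :=
  (cone S).add_mem hy hz

theorem convex_layer : Convex ℝ (layer S w) := by
  intro y₁ h₁ y₂ h₂ s t hs ht hst
  have := (cone S).convex h₁ h₂ hs ht hst
  simpa [layer, ← add_mul, hst] using this

theorem layer_add (ha : 0 ≤ a) (hb : 0 ≤ b) : layer S (a + b) = layer S a + layer S b := by
  refine Subset.antisymm (fun y hy => ?_) ?_
  · rcases (add_nonneg ha hb).eq_or_lt with hab | hab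
    · obtain ⟨rfl, rfl⟩ : a = 0 ∧ b = 0 := ⟨by linarith, by linarith⟩
      exact ⟨0, zero_mem_layer_zero, y, by simpa using hy, zero_add y⟩
    · have hsplit (c : ℝ) (hc : 0 ≤ c) : (c / (a + b)) • y ∈ layer S c := by
        have := (cone S).smul_mem (div_nonneg hc hab.le) hy
        simpa [layer, div_mul_cancel₀ _ hab.ne'] using this
      refine ⟨_, hsplit a ha, _, hsplit b hb, ?_⟩
      simp only [← add_smul, ← add_div, div_self hab.ne', one_smul]
  · rintro _ ⟨y, hy, z, hz, rfl⟩
    exact add_mem_layer hy hz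

theorem mem_layer_add_of_le {x : Fin n → ℝ} (hST : S ⊆ T) {a' b' : ℝ}
    (hx : x ∈ layer S a + layer T b) (ha' : 0 ≤ a') (ha : a' ≤ a) (hsum : a' + b' = a + b) :
    x ∈ layer S a' + layer T b' := by
  obtain ⟨y, hy, z, hz, rfl⟩ := hx
  rw [show a = a' + (a - a') by ring, layer_add ha' (by linarith)] at hy
  obtain ⟨y₁, hy₁, y₂, hy₂, rfl⟩ := hy
  refine ⟨y₁, hy₁, y₂ + z, ?_, by beta_reduce; abel⟩
  convert add_mem_layer (layer_mono hST hy₂) hz using 2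
  linarith

theorem mem_layer_union_iff :
    y ∈ layer (S ∪ T) w ↔ ∃ a b, a + b = w ∧ y ∈ layer S a + layer T b := by
  simp only [layer, mem_ofPred_eq, cone, image_union, Submodule.span_union, Submodule.mem_sup]
  constructor
  · rintro ⟨v, hv, v', hv', hsum⟩
    refine ⟨v.1, v'.1, congrArg Prod.fst hsum, v.2, ?_, v'.2, ?_, congrArg Prod.snd hsum⟩
    · simpa using hv
    · simpa using hv'
  · rintro ⟨a, b, rfl, y, hy, z, hz, rfl⟩
    exact ⟨_, hy, _, hz, rfl⟩

end Layer

theorem snoc_add_snoc (y z : Fin n → ℝ) (h k : ℝ) :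
    (Fin.snoc y h : Fin (n + 1) → ℝ) + Fin.snoc z k = Fin.snoc (y + z) (h + k) := by
  ext i; refine Fin.lastCases ?_ (fun j => ?_) i <;> simp

theorem smul_snoc (r : ℝ) (y : Fin n → ℝ) (h : ℝ) :
    r • (Fin.snoc y h : Fin (n + 1) → ℝ) = Fin.snoc (r • y) (r * h) := by
  ext i; refine Fin.lastCases ?_ (fun j => ?_) i <;> simp

theorem snoc_zero_zero : (Fin.snoc (0 : Fin n → ℝ) 0 : Fin (n + 1) → ℝ) = 0 := by
  ext i; refine Fin.lastCases ?_ (fun j => ?_) i <;> simp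

theorem toReal_snoc (p : Fin n → ℤ) (k : ℤ) :
    toReal (Fin.snoc p k : Fin (n + 1) → ℤ) = Fin.snoc (toReal p) (k : ℝ) := by
  ext i; refine Fin.lastCases ?_ (fun j => ?_) i <;> simp [toReal]

def slab (T : Set (Fin n → ℤ)) (c d : ℤ) : Set (Fin (n + 1) → ℤ) :=
  {p | Fin.init p ∈ T ∧ c ≤ p (Fin.last n) ∧ p (Fin.last n) ≤ d}

section Slab

variable {T : Set (Fin n → ℤ)} {w : ℝ} {c d : ℤ} {h : ℝ}

theorem layer_slab_subset : layer (slab T c d) w ⊆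
    {x | Fin.init x ∈ layer T w ∧ w * c ≤ x (Fin.last n) ∧ x (Fin.last n) ≤ w * d} := by
  intro x hx
  refine Submodule.span_induction (p := fun (v : ℝ × (Fin (n + 1) → ℝ)) _ =>
    (v.1, Fin.init v.2) ∈ cone T ∧ v.1 * c ≤ v.2 (Fin.last n) ∧ v.2 (Fin.last n) ≤ v.1 * d)
    ?_ ?_ ?_ ?_ hx
  · rintro _ ⟨p, ⟨hp, hc, hd⟩, rfl⟩
    refine ⟨Submodule.subset_span ⟨Fin.init p, hp, rfl⟩, ?_, ?_⟩
    · simpa [toReal] using hc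
    · simpa [toReal] using hd
  · exact ⟨(cone T).zero_mem, by simp, by simp⟩
  · rintro v v' - - ⟨h₁, h₂, h₃⟩ ⟨h₁', h₂', h₃'⟩
    refine ⟨(cone T).add_mem h₁ h₁', ?_, ?_⟩ <;> simp only [Prod.fst_add, Prod.snd_add,
      Pi.add_apply] <;> linarith
  · rintro ⟨r, hr⟩ v - ⟨h₁, h₂, h₃⟩
    refine ⟨(cone T).smul_mem hr h₁, ?_, ?_⟩ <;>
      simp only [Nonneg.mk_smul, Prod.smul_fst, Prod.smul_snd, Pi.smul_apply, smul_eq_mul] <;>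
      nlinarith

theorem snoc_mul_mem_layer_slab {z : Fin n → ℝ} (hz : z ∈ layer T w) {e : ℤ} (hce : c ≤ e)
    (hed : e ≤ d) : (Fin.snoc z (w * e) : Fin (n + 1) → ℝ) ∈ layer (slab T c d) w := by
  refine Submodule.span_induction (p := fun v _ =>
    (v.1, (Fin.snoc v.2 (v.1 * e) : Fin (n + 1) → ℝ)) ∈ cone (slab T c d)) ?_ ?_ ?_ ?_ hz
  · rintro _ ⟨p, hp, rfl⟩
    refine Submodule.subset_span ⟨Fin.snoc p e, ⟨by simpa using hp, by simpa using hce,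
      by simpa using hed⟩, ?_⟩
    simp [toReal_snoc]
  · simp [snoc_zero_zero, Prod.mk_zero_zero]
  · rintro v v' - - h₁ h₂
    simpa [snoc_add_snoc, add_mul] using (cone (slab T c d)).add_mem h₁ h₂
  · rintro ⟨r, hr⟩ v - h₁
    simpa [smul_snoc, mul_assoc] using (cone (slab T c d)).smul_mem hr h₁

theorem snoc_mem_layer_slab_iff {z : Fin n → ℝ} :
    (Fin.snoc z h : Fin (n + 1) → ℝ) ∈ layer (slab T c d) w ↔
      z ∈ layer T w ∧ w * c ≤ h ∧ h ≤ w * d := by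
  refine ⟨fun hx => by simpa using layer_slab_subset hx, fun ⟨hz, hc, hd⟩ => ?_⟩
  rcases (nonneg_of_mem_layer hz).eq_or_lt with rfl | hw
  · obtain rfl := eq_zero_of_mem_layer_zero hz
    obtain rfl : h = 0 := by simp only [zero_mul] at hc hd; linarith
    simpa [snoc_zero_zero] using
      (zero_mem_layer_zero : (0 : Fin (n + 1) → ℝ) ∈ layer (slab T c d) 0)
  have hcd : c ≤ d := by exact_mod_cast le_of_mul_le_mul_left (hc.trans hd) hw
  have hconv : Convex ℝ {k : ℝ | (Fin.snoc z k : Fin (n + 1) → ℝ) ∈ layer (slab T c d) w} := by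
    intro k₁ h₁ k₂ h₂ s t hs ht hst
    have := convex_layer h₁ h₂ hs ht hst
    rwa [smul_snoc, smul_snoc, snoc_add_snoc, ← add_smul, hst, one_smul] at this
  refine hconv.segment_subset (snoc_mul_mem_layer_slab hz le_rfl hcd)
    (snoc_mul_mem_layer_slab hz hcd le_rfl) ?_
  rw [segment_eq_Icc (hc.trans hd)]
  exact ⟨hc, hd⟩

theorem mem_layer_slab_iff {x : Fin (n + 1) → ℝ} :
    x ∈ layer (slab T c d) w ↔
      Fin.init x ∈ layer T w ∧ w * c ≤ x (Fin.last n) ∧ x (Fin.last n) ≤ w * d := by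
  conv_lhs => rw [← Fin.snoc_init_self x]
  exact snoc_mem_layer_slab_iff

end Slab

def rect (u : Fin n → ℤ) : Set (Fin n → ℤ) := {x | ∀ i, 0 ≤ x i ∧ x i ≤ u i}

def lexIci (u γ : Fin n → ℤ) : Set (Fin n → ℤ) := {x | x ∈ rect u ∧ lexLe γ x}

def lexIic (u θ : Fin n → ℤ) : Set (Fin n → ℤ) := {x | x ∈ rect u ∧ lexLe x θ}

def lexIcc (u γ θ : Fin n → ℤ) : Set (Fin n → ℤ) := {x | x ∈ rect u ∧ lexLe γ x ∧ lexLe x θ}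

theorem lexLe_refl (x : Fin n → ℤ) : lexLe x x := Or.inl rfl

theorem self_mem_lexIci {u γ : Fin n → ℤ} (hγ : γ ∈ rect u) : γ ∈ lexIci u γ :=
  ⟨hγ, lexLe_refl γ⟩

theorem self_mem_lexIic {u θ : Fin n → ℤ} (hθ : θ ∈ rect u) : θ ∈ lexIic u θ :=
  ⟨hθ, lexLe_refl θ⟩

theorem left_mem_lexIcc {u γ θ : Fin n → ℤ} (hγ : γ ∈ rect u) (hγθ : lexLe γ θ) :
    γ ∈ lexIcc u γ θ :=
  ⟨hγ, lexLe_refl γ, hγθ⟩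

theorem lexLe_succ_iff {y x : Fin (n + 1) → ℤ} :
    lexLe y x ↔ y (Fin.last n) < x (Fin.last n) ∨
      y (Fin.last n) = x (Fin.last n) ∧ lexLe (Fin.init y) (Fin.init x) := by
  constructor
  · rintro (rfl | ⟨s, hs, hk⟩)
    · exact Or.inr ⟨rfl, Or.inl rfl⟩
    · rcases Fin.eq_castSucc_or_eq_last s with ⟨s, rfl⟩ | rfl
      · exact Or.inr ⟨hk _ (Fin.castSucc_lt_last s),
          Or.inr ⟨s, hs, fun k hk' => hk _ (Fin.castSucc_lt_castSucc_iff.2 hk')⟩⟩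
      · exact Or.inl hs
  · rintro (h | ⟨he, hi | ⟨s, hs, hk⟩⟩)
    · exact Or.inr ⟨Fin.last n, h, fun k hk => absurd hk (Fin.le_last k).not_gt⟩
    · exact Or.inl (by rw [← Fin.snoc_init_self y, ← Fin.snoc_init_self x, he, hi])
    · refine Or.inr ⟨s.castSucc, hs, fun k hk' => ?_⟩
      rcases Fin.eq_castSucc_or_eq_last k with ⟨k, rfl⟩ | rfl
      · exact hk k (Fin.castSucc_lt_castSucc_iff.1 hk')
      · exact he

theorem exists_mem_Icc_sub_mem_Icc {a₁ b₁ a₂ b₂ s : ℝ} (h₁ : a₁ ≤ b₁) (h₂ : a₂ ≤ b₂)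
    (hlo : a₁ + a₂ ≤ s) (hhi : s ≤ b₁ + b₂) : ∃ s₁ ∈ Icc a₁ b₁, s - s₁ ∈ Icc a₂ b₂ :=
  ⟨max a₁ (s - b₂), ⟨le_max_left _ _, max_le h₁ (by linarith)⟩,
    le_sub_comm.1 (max_le (by linarith) (by linarith)), by linarith [le_max_right a₁ (s - b₂)]⟩

-- The last coordinate in the inductive step of `layer_lexIci_add_inter_subset`: `β`, `β'` are the
-- weights the two given decompositions put on the box above `g`, resp. below `t`, and `p`, `q`
-- those of the combined one.
theorem exists_transfer_weights {a b c β β' s : ℝ} {g m t : ℤ} (hβa : β ≤ a) (hβ'b : β' ≤ b)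
    (hc : 0 ≤ c) (hm : 0 ≤ m) (hβg : β ≤ β * (m - g)) (hβ't : β' ≤ β' * t)
    (hlo : a * g + β ≤ s) (hhi : s ≤ b * t - β' + (a + c) * m) :
    ∃ p q, β ≤ p ∧ p ≤ a ∧ β' ≤ q ∧ q ≤ b ∧ p ≤ p * (m - g) ∧ q ≤ q * t ∧
      a * g + p + (b - q) * t ≤ s ∧ s ≤ a * g + p * (m - g) + b * t - q + c * m := by
  have hm' : (0 : ℝ) ≤ m := by exact_mod_cast hm
  rcases le_or_gt (a * g + β + (b - β') * t) s with hA | hA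
  · rcases le_or_gt s (a * g + β * (m - g) + b * t - β' + c * m) with hA' | hA'
    · exact ⟨β, β', le_rfl, hβa, le_rfl, hβ'b, hβg, hβ't, hA, hA'⟩
    obtain ⟨p, ⟨hp₁, hp₂⟩, hp⟩ := intermediate_value_Icc hβa
      (f := fun p => a * g + p * (m - g) + b * t - β' + c * m) (by fun_prop)
      ⟨hA'.le, by linarith⟩
    simp only at hp
    have hmg : (1 : ℝ) ≤ m - g := by
      have : (0 : ℝ) < m - g := by nlinarith
      have : (0 : ℤ) < m - g := by exact_mod_cast this
      exact_mod_cast (show (1 : ℤ) ≤ m - g by omega)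
    exact ⟨p, β', hp₁, hp₂, le_rfl, hβ'b, by nlinarith, hβ't, by nlinarith, hp.ge⟩
  · obtain ⟨q, ⟨hq₁, hq₂⟩, hq⟩ := intermediate_value_Icc' hβ'b
      (f := fun q => a * g + β + (b - q) * t) (by fun_prop) ⟨by linarith, hA.le⟩
    simp only at hq
    have ht : (1 : ℝ) ≤ t := by
      have : (0 : ℝ) < t := by nlinarith
      have : (0 : ℤ) < t := by exact_mod_cast this
      exact_mod_cast (show (1 : ℤ) ≤ t by omega)
    exact ⟨β, q, le_rfl, hβa, hq₁, hq₂, hβg, by nlinarith, hq.le, by nlinarith⟩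

-- The same for the band when `g < t`: `a`, `b`, `w - a - b` are the weights of the slabs at
-- height `g`, at height `t`, and strictly between.
theorem exists_band_weights {w β β' s : ℝ} {g t : ℤ} (hgt : g < t) (hβ : 0 ≤ β) (hβw : β ≤ w)
    (hβ' : 0 ≤ β') (hβ'w : β' ≤ w) (hlo : w * g + β ≤ s) (hhi : s ≤ w * t - β') :
    ∃ a b, 0 ≤ a ∧ a ≤ w - β ∧ 0 ≤ b ∧ b ≤ w - β' ∧ a + b ≤ w ∧
      a * g + b * t + (w - a - b) * (g + 1) ≤ s ∧ s ≤ a * g + b * t + (w - a - b) * (t - 1) := by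
  rcases (show t = g + 1 ∨ g + 2 ≤ t by omega) with rfl | ht
  · push_cast at hhi ⊢
    refine ⟨w - (s - w * g), s - w * g, ?_, ?_, ?_, ?_, ?_, ?_, ?_⟩ <;> nlinarith
  have ht' : (g : ℝ) + 2 ≤ t := by exact_mod_cast ht
  rcases le_or_gt s (w * (t - 1) - (w - β) * (t - 1 - g)) with h₀ | h₀
  · exact ⟨w - β, 0, by linarith, le_rfl, le_rfl, by linarith, by linarith, by nlinarith,
      by nlinarith⟩
  obtain ⟨τ, ⟨hτ₀, hτ₁⟩, hτ⟩ := intermediate_value_Icc zero_le_one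
    (f := fun τ => w * (t - 1) - (w - β) * (1 - τ) * (t - 1 - g) + (w - β') * τ) (by fun_prop)
    ⟨by simpa using h₀.le, by linarith⟩
  simp only at hτ
  refine ⟨(w - β) * (1 - τ), (w - β') * τ, by nlinarith, by nlinarith, by nlinarith,
    by nlinarith, by nlinarith, ?_, by linarith⟩
  nlinarith [mul_nonneg (mul_nonneg hβ (sub_nonneg.2 hτ₁)) (by linarith : (0:ℝ) ≤ t - 1 - g),
    mul_nonneg (mul_nonneg hβ' hτ₀) (by linarith : (0:ℝ) ≤ t - 1 - g)]

section Succ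

variable {u γ θ : Fin (n + 1) → ℤ} {x : Fin (n + 1) → ℝ} {a b c r : ℝ}

theorem mem_rect_succ {x : Fin (n + 1) → ℤ} : x ∈ rect u ↔
    Fin.init x ∈ rect (Fin.init u) ∧ 0 ≤ x (Fin.last n) ∧ x (Fin.last n) ≤ u (Fin.last n) := by
  simp only [rect, mem_ofPred_eq, Fin.forall_fin_succ', Fin.init]

theorem rect_succ : rect u = slab (rect (Fin.init u)) 0 (u (Fin.last n)) := by
  ext x; exact mem_rect_succ

theorem init_mem_rect {x : Fin (n + 1) → ℤ} (hx : x ∈ rect u) :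
    Fin.init x ∈ rect (Fin.init u) :=
  (mem_rect_succ.1 hx).1

theorem lexIci_succ (hγ : γ ∈ rect u) :
    lexIci u γ = slab (lexIci (Fin.init u) (Fin.init γ)) (γ (Fin.last n)) (γ (Fin.last n)) ∪
      slab (rect (Fin.init u)) (γ (Fin.last n) + 1) (u (Fin.last n)) := by
  have := hγ (Fin.last n)
  ext x
  simp only [lexIci, slab, mem_union, mem_ofPred_eq, mem_rect_succ, lexLe_succ_iff]
  constructor
  · rintro ⟨⟨hx, h0, hm⟩, h | ⟨h, hl⟩⟩
    · exact Or.inr ⟨hx, by omega, hm⟩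
    · exact Or.inl ⟨⟨hx, hl⟩, by omega, by omega⟩
  · rintro (⟨⟨hx, hl⟩, h₁, h₂⟩ | ⟨hx, h₁, h₂⟩)
    · exact ⟨⟨hx, by omega, by omega⟩, Or.inr ⟨by omega, hl⟩⟩
    · exact ⟨⟨hx, by omega, h₂⟩, Or.inl (by omega)⟩

theorem lexIic_succ (hθ : θ ∈ rect u) :
    lexIic u θ = slab (lexIic (Fin.init u) (Fin.init θ)) (θ (Fin.last n)) (θ (Fin.last n)) ∪
      slab (rect (Fin.init u)) 0 (θ (Fin.last n) - 1) := by
  have := hθ (Fin.last n)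
  ext x
  simp only [lexIic, slab, mem_union, mem_ofPred_eq, mem_rect_succ, lexLe_succ_iff]
  constructor
  · rintro ⟨⟨hx, h0, hm⟩, h | ⟨h, hl⟩⟩
    · exact Or.inr ⟨hx, h0, by omega⟩
    · exact Or.inl ⟨⟨hx, hl⟩, by omega, by omega⟩
  · rintro (⟨⟨hx, hl⟩, h₁, h₂⟩ | ⟨hx, h₁, h₂⟩)
    · exact ⟨⟨hx, by omega, by omega⟩, Or.inr ⟨by omega, hl⟩⟩
    · exact ⟨⟨hx, h₁, by omega⟩, Or.inl (by omega)⟩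

theorem lexIcc_succ_of_eq (hγ : γ ∈ rect u) (h : γ (Fin.last n) = θ (Fin.last n)) :
    lexIcc u γ θ = slab (lexIcc (Fin.init u) (Fin.init γ) (Fin.init θ))
      (γ (Fin.last n)) (γ (Fin.last n)) := by
  have := hγ (Fin.last n)
  ext x
  simp only [lexIcc, slab, mem_ofPred_eq, mem_rect_succ, lexLe_succ_iff]
  constructor
  · rintro ⟨⟨hx, h0, hm⟩, h₁ | ⟨h₁, hl₁⟩, h₂ | ⟨h₂, hl₂⟩⟩ <;> first | omega |
      exact ⟨⟨hx, hl₁, hl₂⟩, by omega, by omega⟩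
  · rintro ⟨⟨hx, hl₁, hl₂⟩, h₁, h₂⟩
    exact ⟨⟨hx, by omega, by omega⟩, Or.inr ⟨by omega, hl₁⟩, Or.inr ⟨by omega, hl₂⟩⟩

theorem lexIcc_succ_of_lt (hγ : γ ∈ rect u) (hθ : θ ∈ rect u)
    (h : γ (Fin.last n) < θ (Fin.last n)) :
    lexIcc u γ θ =
      slab (lexIci (Fin.init u) (Fin.init γ)) (γ (Fin.last n)) (γ (Fin.last n)) ∪
      slab (lexIic (Fin.init u) (Fin.init θ)) (θ (Fin.last n)) (θ (Fin.last n)) ∪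
      slab (rect (Fin.init u)) (γ (Fin.last n) + 1) (θ (Fin.last n) - 1) := by
  have := hγ (Fin.last n)
  have := hθ (Fin.last n)
  ext x
  simp only [lexIcc, lexIci, lexIic, slab, mem_union, mem_ofPred_eq, mem_rect_succ,
    lexLe_succ_iff]
  constructor
  · rintro ⟨⟨hx, h0, hm⟩, h₁ | ⟨h₁, hl₁⟩, h₂ | ⟨h₂, hl₂⟩⟩
    · exact Or.inr ⟨hx, by omega, by omega⟩
    · exact Or.inl (Or.inr ⟨⟨hx, hl₂⟩, by omega, by omega⟩)
    · exact Or.inl (Or.inl ⟨⟨hx, hl₁⟩, by omega, by omega⟩)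
    · omega
  · rintro ((⟨⟨hx, hl⟩, h₁, h₂⟩ | ⟨⟨hx, hl⟩, h₁, h₂⟩) | ⟨hx, h₁, h₂⟩)
    · exact ⟨⟨hx, by omega, by omega⟩, Or.inr ⟨by omega, hl⟩, Or.inl (by omega)⟩
    · exact ⟨⟨hx, by omega, by omega⟩, Or.inl (by omega), Or.inr ⟨by omega, hl⟩⟩
    · exact ⟨⟨hx, by omega, by omega⟩, Or.inl (by omega), Or.inl (by omega)⟩

theorem exists_of_mem_layer_lexIci_add (hγ : γ ∈ rect u)
    (hx : x ∈ layer (lexIci u γ) a + layer (rect u) r) :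
    ∃ β, 0 ≤ β ∧ β ≤ a ∧ β ≤ β * (u (Fin.last n) - γ (Fin.last n)) ∧
      Fin.init x ∈ layer (lexIci (Fin.init u) (Fin.init γ)) (a - β) +
        layer (rect (Fin.init u)) (β + r) ∧
      a * γ (Fin.last n) + β ≤ x (Fin.last n) := by
  obtain ⟨y, hy, z, hz, rfl⟩ := hx
  rw [lexIci_succ hγ, mem_layer_union_iff] at hy
  obtain ⟨α, β, rfl, y₁, hy₁, y₂, hy₂, rfl⟩ := hy
  obtain ⟨hy₁, h₁, -⟩ := mem_layer_slab_iff.1 hy₁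
  obtain ⟨hy₂, h₂, h₃⟩ := mem_layer_slab_iff.1 hy₂
  rw [rect_succ] at hz
  obtain ⟨hz, h₄, -⟩ := mem_layer_slab_iff.1 hz
  have hβ := nonneg_of_mem_layer hy₂
  refine ⟨β, hβ, by linarith [nonneg_of_mem_layer hy₁], by push_cast at h₂ h₃; nlinarith,
    ⟨_, by rwa [add_sub_cancel_right], _, add_mem_layer hy₂ hz, (add_assoc _ _ _).symm⟩, ?_⟩
  push_cast at h₁ h₂ h₄ ⊢
  simp only [Pi.add_apply]
  nlinarith

theorem exists_of_mem_layer_lexIic_add (hθ : θ ∈ rect u)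
    (hx : x ∈ layer (lexIic u θ) b + layer (rect u) r) :
    ∃ β, 0 ≤ β ∧ β ≤ b ∧ β ≤ β * θ (Fin.last n) ∧
      Fin.init x ∈ layer (lexIic (Fin.init u) (Fin.init θ)) (b - β) +
        layer (rect (Fin.init u)) (β + r) ∧
      x (Fin.last n) ≤ b * θ (Fin.last n) - β + r * u (Fin.last n) := by
  obtain ⟨y, hy, z, hz, rfl⟩ := hx
  rw [lexIic_succ hθ, mem_layer_union_iff] at hy
  obtain ⟨α, β, rfl, y₁, hy₁, y₂, hy₂, rfl⟩ := hy
  obtain ⟨hy₁, -, h₁⟩ := mem_layer_slab_iff.1 hy₁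
  obtain ⟨hy₂, h₂, h₃⟩ := mem_layer_slab_iff.1 hy₂
  rw [rect_succ] at hz
  obtain ⟨hz, -, h₄⟩ := mem_layer_slab_iff.1 hz
  have hβ := nonneg_of_mem_layer hy₂
  refine ⟨β, hβ, by linarith [nonneg_of_mem_layer hy₁], by push_cast at h₂ h₃; nlinarith,
    ⟨_, by rwa [add_sub_cancel_right], _, add_mem_layer hy₂ hz, (add_assoc _ _ _).symm⟩, ?_⟩
  push_cast at h₁ h₃ h₄ ⊢
  simp only [Pi.add_apply]
  nlinarith

theorem snoc_add_mem_layer_lexIci (hγ : γ ∈ rect u) {A E : Fin n → ℝ} {h : ℝ}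
    (hA : A ∈ layer (lexIci (Fin.init u) (Fin.init γ)) a)
    (hE : E ∈ layer (rect (Fin.init u)) b) (h₁ : b * (γ (Fin.last n) + 1) ≤ h)
    (h₂ : h ≤ b * u (Fin.last n)) :
    (Fin.snoc (A + E) (a * γ (Fin.last n) + h) : Fin (n + 1) → ℝ) ∈
      layer (lexIci u γ) (a + b) := by
  rw [lexIci_succ hγ, mem_layer_union_iff, ← snoc_add_snoc]
  refine ⟨a, b, rfl, _, ?_, _, ?_, rfl⟩ <;> rw [snoc_mem_layer_slab_iff]
  · exact ⟨hA, le_rfl, le_rfl⟩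
  · exact ⟨hE, by push_cast; exact h₁, h₂⟩

theorem snoc_add_mem_layer_lexIic (hθ : θ ∈ rect u) {C E : Fin n → ℝ} {h : ℝ}
    (hC : C ∈ layer (lexIic (Fin.init u) (Fin.init θ)) a)
    (hE : E ∈ layer (rect (Fin.init u)) b) (h₁ : 0 ≤ h) (h₂ : h ≤ b * (θ (Fin.last n) - 1)) :
    (Fin.snoc (C + E) (a * θ (Fin.last n) + h) : Fin (n + 1) → ℝ) ∈
      layer (lexIic u θ) (a + b) := by
  rw [lexIic_succ hθ, mem_layer_union_iff, ← snoc_add_snoc]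
  refine ⟨a, b, rfl, _, ?_, _, ?_, rfl⟩ <;> rw [snoc_mem_layer_slab_iff]
  · exact ⟨hC, le_rfl, le_rfl⟩
  · exact ⟨hE, by simpa using h₁, by push_cast; exact h₂⟩

theorem snoc_mem_layer_rect {E : Fin n → ℝ} {h : ℝ} (hE : E ∈ layer (rect (Fin.init u)) c)
    (h₁ : 0 ≤ h) (h₂ : h ≤ c * u (Fin.last n)) :
    (Fin.snoc E h : Fin (n + 1) → ℝ) ∈ layer (rect u) c := by
  rw [rect_succ, snoc_mem_layer_slab_iff]
  exact ⟨hE, by simpa using h₁, h₂⟩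

theorem mem_layer_add_add_of_init (hγ : γ ∈ rect u) (hθ : θ ∈ rect u) {p q : ℝ}
    (hp : 0 ≤ p) (hq : 0 ≤ q) (hc : 0 ≤ c)
    (hpg : p ≤ p * (u (Fin.last n) - γ (Fin.last n))) (hqt : q ≤ q * θ (Fin.last n))
    (hx : Fin.init x ∈ layer (lexIci (Fin.init u) (Fin.init γ)) (a - p) +
      layer (lexIic (Fin.init u) (Fin.init θ)) (b - q) + layer (rect (Fin.init u)) (p + q + c))
    (hlo : a * γ (Fin.last n) + p + (b - q) * θ (Fin.last n) ≤ x (Fin.last n))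
    (hhi : x (Fin.last n) ≤ a * γ (Fin.last n) + p * (u (Fin.last n) - γ (Fin.last n)) +
      b * θ (Fin.last n) - q + c * u (Fin.last n)) :
    x ∈ layer (lexIci u γ) a + layer (lexIic u θ) b + layer (rect u) c := by
  have hm : (0 : ℝ) ≤ u (Fin.last n) := by exact_mod_cast (hγ _).1.trans (hγ _).2
  obtain ⟨_, ⟨A, hA, C, hC, rfl⟩, E, hE, hAE⟩ := hx
  rw [layer_add (add_nonneg hp hq) hc, layer_add hp hq] at hE
  obtain ⟨_, ⟨E₁, hE₁, E₂, hE₂, rfl⟩, E₃, hE₃, rfl⟩ := hE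
  set s := x (Fin.last n) - (a - p) * γ (Fin.last n) - (b - q) * θ (Fin.last n)
  obtain ⟨h₁, ⟨h₁lo, h₁hi⟩, h₂₃lo, h₂₃hi⟩ :=
    exists_mem_Icc_sub_mem_Icc (s := s) (a₁ := p * (γ (Fin.last n) + 1)) (b₁ := p * u (Fin.last n))
      (a₂ := 0) (b₂ := q * (θ (Fin.last n) - 1) + c * u (Fin.last n))
      (by nlinarith) (by nlinarith) (by linarith) (by linarith)
  obtain ⟨h₂, ⟨h₂lo, h₂hi⟩, h₃lo, h₃hi⟩ := exists_mem_Icc_sub_mem_Icc (s := s - h₁)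
    (a₁ := 0) (b₁ := q * (θ (Fin.last n) - 1)) (a₂ := 0) (b₂ := c * u (Fin.last n))
    (by nlinarith) (by positivity) (by linarith) h₂₃hi
  have hx : x = Fin.snoc (A + E₁) ((a - p) * γ (Fin.last n) + h₁) +
      Fin.snoc (C + E₂) ((b - q) * θ (Fin.last n) + h₂) + Fin.snoc E₃ (s - h₁ - h₂) := by
    rw [snoc_add_snoc, snoc_add_snoc, ← Fin.snoc_init_self x, ← hAE]
    congr 1
    · beta_reduce; abel
    · simp only [s]; ring
  have := add_mem_add (add_mem_add (snoc_add_mem_layer_lexIci hγ hA hE₁ h₁lo h₁hi)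
    (snoc_add_mem_layer_lexIic hθ hC hE₂ h₂lo h₂hi)) (snoc_mem_layer_rect hE₃ h₃lo h₃hi)
  rwa [sub_add_cancel, sub_add_cancel, ← hx] at this

theorem mem_layer_lexIcc_of_init (hγ : γ ∈ rect u) (hθ : θ ∈ rect u)
    (h : γ (Fin.last n) < θ (Fin.last n))
    (hx : Fin.init x ∈ layer (lexIci (Fin.init u) (Fin.init γ)) a +
      layer (lexIic (Fin.init u) (Fin.init θ)) b + layer (rect (Fin.init u)) c)
    (hlo : a * γ (Fin.last n) + b * θ (Fin.last n) + c * (γ (Fin.last n) + 1) ≤ x (Fin.last n))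
    (hhi : x (Fin.last n) ≤ a * γ (Fin.last n) + b * θ (Fin.last n) + c * (θ (Fin.last n) - 1)) :
    x ∈ layer (lexIcc u γ θ) (a + b + c) := by
  obtain ⟨_, ⟨A, hA, C, hC, rfl⟩, E, hE, hACE⟩ := hx
  have hx : x = Fin.snoc A (a * γ (Fin.last n)) + Fin.snoc C (b * θ (Fin.last n)) +
      Fin.snoc E (x (Fin.last n) - a * γ (Fin.last n) - b * θ (Fin.last n)) := by
    rw [snoc_add_snoc, snoc_add_snoc, ← Fin.snoc_init_self x, ← hACE]
    congr 1
    simp only [Fin.snoc_last]; ring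
  rw [lexIcc_succ_of_lt hγ hθ h, mem_layer_union_iff, hx]
  refine ⟨a + b, c, rfl, _, ?_, _, ?_, rfl⟩
  · rw [mem_layer_union_iff]
    refine ⟨a, b, rfl, _, ?_, _, ?_, rfl⟩ <;> rw [snoc_mem_layer_slab_iff]
    exacts [⟨hA, le_rfl, le_rfl⟩, ⟨hC, le_rfl, le_rfl⟩]
  · rw [snoc_mem_layer_slab_iff]
    push_cast
    exact ⟨hE, by linarith, by linarith⟩

end Succ

theorem layer_lexIci_add_inter_subset_succ {u γ θ : Fin (n + 1) → ℤ} (hγ : γ ∈ rect u)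
    (hθ : θ ∈ rect u)
    (ih : ∀ a b c : ℝ, 0 ≤ c →
      (layer (lexIci (Fin.init u) (Fin.init γ)) a + layer (rect (Fin.init u)) (b + c)) ∩
        (layer (lexIic (Fin.init u) (Fin.init θ)) b + layer (rect (Fin.init u)) (a + c)) ⊆
      layer (lexIci (Fin.init u) (Fin.init γ)) a + layer (lexIic (Fin.init u) (Fin.init θ)) b +
        layer (rect (Fin.init u)) c)
    {a b c : ℝ} (hc : 0 ≤ c) :
    (layer (lexIci u γ) a + layer (rect u) (b + c)) ∩
        (layer (lexIic u θ) b + layer (rect u) (a + c)) ⊆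
      layer (lexIci u γ) a + layer (lexIic u θ) b + layer (rect u) c := by
  rintro x ⟨hxL, hxU⟩
  obtain ⟨β, hβ, hβa, hβg, hL, hlo⟩ := exists_of_mem_layer_lexIci_add hγ hxL
  obtain ⟨β', hβ', hβ'b, hβ't, hU, hhi⟩ := exists_of_mem_layer_lexIic_add hθ hxU
  obtain ⟨p, q, hp, hpa, hq, hqb, hpg, hqt, hlo', hhi'⟩ :=
    exists_transfer_weights hβa hβ'b hc ((hγ _).1.trans (hγ _).2) hβg hβ't hlo hhi
  refine mem_layer_add_add_of_init hγ hθ (hβ.trans hp) (hβ'.trans hq) hc hpg hqt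
    (ih _ _ _ (by linarith) (mem_inter ?_ ?_)) hlo' hhi'
  · exact mem_layer_add_of_le (fun _ h => h.1) hL (by linarith) (by linarith) (by ring)
  · exact mem_layer_add_of_le (fun _ h => h.1) hU (by linarith) (by linarith) (by ring)

theorem layer_lexIci_add_inter_subset :
    ∀ {n : ℕ} {u γ θ : Fin n → ℤ}, γ ∈ rect u → θ ∈ rect u → ∀ {a b c : ℝ}, 0 ≤ c →
      (layer (lexIci u γ) a + layer (rect u) (b + c)) ∩
          (layer (lexIic u θ) b + layer (rect u) (a + c)) ⊆
        layer (lexIci u γ) a + layer (lexIic u θ) b + layer (rect u) c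
  | 0, _, _, _, hγ, hθ, _, _, _, hc => by
    rintro x ⟨⟨y, hy, -, -, -⟩, ⟨y', hy', -, -, -⟩⟩
    exact ⟨0, ⟨0, mem_layer_fin_zero (self_mem_lexIci hγ) (nonneg_of_mem_layer hy) 0,
      0, mem_layer_fin_zero (self_mem_lexIic hθ) (nonneg_of_mem_layer hy') 0, add_zero 0⟩,
      x, mem_layer_fin_zero hγ hc x, Subsingleton.elim _ _⟩
  | _ + 1, _, _, _, hγ, hθ, _, _, _, hc =>
    layer_lexIci_add_inter_subset_succ hγ hθ
      (fun _ _ _ hc => layer_lexIci_add_inter_subset (init_mem_rect hγ) (init_mem_rect hθ) hc)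
      hc

theorem layer_lexIci_inter_layer_lexIic_subset_succ {u γ θ : Fin (n + 1) → ℤ}
    (hγ : γ ∈ rect u) (hθ : θ ∈ rect u) (hγθ : lexLe γ θ)
    (ih : lexLe (Fin.init γ) (Fin.init θ) → ∀ w : ℝ,
      layer (lexIci (Fin.init u) (Fin.init γ)) w ∩ layer (lexIic (Fin.init u) (Fin.init θ)) w ⊆
        layer (lexIcc (Fin.init u) (Fin.init γ) (Fin.init θ)) w)
    (w : ℝ) : layer (lexIci u γ) w ∩ layer (lexIic u θ) w ⊆ layer (lexIcc u γ θ) w := by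
  rintro x ⟨hxL, hxU⟩
  obtain ⟨β, hβ, hβw, -, hL, hlo⟩ := exists_of_mem_layer_lexIci_add hγ (r := 0)
    ⟨x, hxL, 0, zero_mem_layer_zero, add_zero x⟩
  obtain ⟨β', hβ', hβ'w, -, hU, hhi⟩ := exists_of_mem_layer_lexIic_add hθ (r := 0)
    ⟨x, hxU, 0, zero_mem_layer_zero, add_zero x⟩
  rw [zero_mul, add_zero] at hhi
  rw [add_zero] at hL hU
  rcases lexLe_succ_iff.1 hγθ with hlt | ⟨heq, hinit⟩
  · obtain ⟨a, b, ha, haw, hb, hbw, hab, hlo', hhi'⟩ :=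
      exists_band_weights hlt hβ hβw hβ' hβ'w hlo hhi
    have := mem_layer_lexIcc_of_init hγ hθ hlt (layer_lexIci_add_inter_subset
      (init_mem_rect hγ) (init_mem_rect hθ) (c := w - a - b) (by linarith)
      (mem_inter (mem_layer_add_of_le (fun _ h => h.1) hL ha haw (by ring))
        (mem_layer_add_of_le (fun _ h => h.1) hU hb hbw (by ring)))) hlo' hhi'
    rwa [show a + b + (w - a - b) = w by ring] at this
  · rw [← heq] at hhi
    obtain ⟨rfl, rfl⟩ : β = 0 ∧ β' = 0 := ⟨by linarith, by linarith⟩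
    rw [sub_zero, layer_zero, singleton_zero, add_zero] at hL hU
    rw [lexIcc_succ_of_eq hγ heq, mem_layer_slab_iff]
    exact ⟨ih hinit w ⟨hL, hU⟩, by linarith, by linarith⟩

theorem layer_lexIci_inter_layer_lexIic_subset :
    ∀ {n : ℕ} {u γ θ : Fin n → ℤ}, γ ∈ rect u → θ ∈ rect u → lexLe γ θ → ∀ w : ℝ,
      layer (lexIci u γ) w ∩ layer (lexIic u θ) w ⊆ layer (lexIcc u γ θ) w
  | 0, _, _, _, hγ, _, hγθ, _ => fun x ⟨hx, _⟩ =>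
    mem_layer_fin_zero (left_mem_lexIcc hγ hγθ) (nonneg_of_mem_layer hx) x
  | _ + 1, _, _, _, hγ, hθ, hγθ, w =>
    layer_lexIci_inter_layer_lexIic_subset_succ hγ hθ hγθ
      (layer_lexIci_inter_layer_lexIic_subset (init_mem_rect hγ) (init_mem_rect hθ)) w

end LexRect

theorem stmt_12_general {n : ℕ}
    (u γ θ : Fin n → ℤ)
    (hγ : ∀ i, 0 ≤ γ i ∧ γ i ≤ u i) (hθ : ∀ i, 0 ≤ θ i ∧ θ i ≤ u i)
    (hγθ : lexLe γ θ) :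
    convexHull ℝ (toReal ''
        {x : Fin n → ℤ | (∀ i, 0 ≤ x i ∧ x i ≤ u i) ∧ lexLe γ x ∧ lexLe x θ}) =
      convexHull ℝ (toReal ''
          {x : Fin n → ℤ | (∀ i, 0 ≤ x i ∧ x i ≤ u i) ∧ lexLe γ x}) ∩
        convexHull ℝ (toReal ''
          {x : Fin n → ℤ | (∀ i, 0 ≤ x i ∧ x i ≤ u i) ∧ lexLe x θ}) := by
  refine Set.Subset.antisymm (Set.subset_inter ?_ ?_) ?_
  · exact convexHull_mono (Set.image_mono fun x hx => ⟨hx.1, hx.2.1⟩)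
  · exact convexHull_mono (Set.image_mono fun x hx => ⟨hx.1, hx.2.2⟩)
  · have := LexRect.layer_lexIci_inter_layer_lexIic_subset hγ hθ hγθ 1
    rwa [LexRect.layer_one, LexRect.layer_one, LexRect.layer_one] at this

/-- the convex hull operator distributes over the intersection of the
`⪰ γ` set and the `⪯ θ` set inside the box `rect u`. -/
theorem stmt_12 {n : ℕ} (hn : 1 ≤ n)
    (u γ θ : Fin n → ℤ) (hu : ∀ i, 1 ≤ u i)
    (hγ : ∀ i, 0 ≤ γ i ∧ γ i ≤ u i) (hθ : ∀ i, 0 ≤ θ i ∧ θ i ≤ u i)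
    (hγθ : lexLe γ θ) :
    convexHull ℝ (toReal ''
        {x : Fin n → ℤ | (∀ i, 0 ≤ x i ∧ x i ≤ u i) ∧ lexLe γ x ∧ lexLe x θ}) =
      convexHull ℝ (toReal ''
          {x : Fin n → ℤ | (∀ i, 0 ≤ x i ∧ x i ≤ u i) ∧ lexLe γ x}) ∩
        convexHull ℝ (toReal ''
          {x : Fin n → ℤ | (∀ i, 0 ≤ x i ∧ x i ≤ u i) ∧ lexLe x θ}) :=
  stmt_12_general u γ θ hγ hθ hγθ
end
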